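/- Let S be an n×n Seidel matrix with spectrum {[λ]^a, [μ]^b, [ν]^1} where a, b ≥ 1 and λ, μ, ν are distinct. Then the ν-eigenspace of S contains a vector all of whose entries are ±1. -/

import Mathlib

/-!
Let `v` be a unit `ν`-eigenvector of the symmetric matrix `S`. Since every other eigenvalue is
`λ` or `μ`, the spectral theorem gives `(S - λ)(S - μ) = (ν - λ)(ν - μ) v vᵀ`. For a Seidel
matrix the diagonal of `S²` is constantly `n - 1` and that of `S` is `0`, so the diagonal of the
left side is constant. Hence all `v i ^ 2` are equal, and a rescaling of `v` has entries `±1`.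
-/

open Polynomial

def IsSeidel {n : ℕ} (S : Matrix (Fin n) (Fin n) ℝ) : Prop :=
  S.IsSymm ∧ (∀ i, S i i = 0) ∧ ∀ i j, i ≠ j → S i j = 1 ∨ S i j = -1

open Matrix

namespace Matrix.IsHermitian

variable {𝕜 n : Type*} [RCLike 𝕜] [Fintype n] [DecidableEq n] {A : Matrix n n 𝕜}
  (hA : A.IsHermitian)

include hA

theorem aeval_eq_eigenvectorUnitary_mul_diagonal_mul_star (q : ℝ[X]) :
    aeval A q = (hA.eigenvectorUnitary : Matrix n n 𝕜) *
      diagonal (fun i ↦ ((q.eval (hA.eigenvalues i) : ℝ) : 𝕜)) *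
      star (hA.eigenvectorUnitary : Matrix n n 𝕜) := by
  rw [← cfc_polynomial q A hA.isSelfAdjoint, hA.cfc_eq, IsHermitian.cfc,
    Unitary.conjStarAlgAut_apply]
  rfl

theorem aeval_eq_smul_vecMulVec_of_eval_eigenvalues_eq_zero (q : ℝ[X]) (i₀ : n)
    (hq : ∀ i ≠ i₀, q.eval (hA.eigenvalues i) = 0) :
    aeval A q = ((q.eval (hA.eigenvalues i₀) : ℝ) : 𝕜) •
      vecMulVec ⇑(hA.eigenvectorBasis i₀) (star ⇑(hA.eigenvectorBasis i₀)) := by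
  ext i j
  rw [hA.aeval_eq_eigenvectorUnitary_mul_diagonal_mul_star, mul_apply,
    Finset.sum_eq_single i₀ (fun k _ hk ↦ by simp [hq k hk]) (by simp)]
  simp only [mul_diagonal, eigenvectorUnitary_apply, star_apply, Matrix.smul_apply,
    vecMulVec_apply, Pi.star_apply, smul_eq_mul]
  ring

theorem card_filter_eigenvalues_eq (r : ℝ) :
    (Finset.univ.filter (hA.eigenvalues · = r)).card =
      A.charpoly.rootMultiplicity (r : 𝕜) := by
  classical
  rw [← count_roots, hA.roots_charpoly_eq_eigenvalues, Multiset.count_map]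
  simp [eq_comm, Finset.card, Finset.filter_val]

theorem isRoot_charpoly_eigenvalues (i : n) : A.charpoly.IsRoot (hA.eigenvalues i : 𝕜) := by
  rw [hA.charpoly_eq, IsRoot, eval_prod]
  exact Finset.prod_eq_zero (Finset.mem_univ i) (by simp)

end Matrix.IsHermitian

theorem Polynomial.rootMultiplicity_X_sub_C_pow_mul_X_sub_C_pow_mul_X_sub_C {R : Type*}
    [CommRing R] [IsDomain R] {lam mu nu : R} (a b : ℕ) (hln : lam ≠ nu) (hmn : mu ≠ nu) :
    ((X - C lam) ^ a * (X - C mu) ^ b * (X - C nu)).rootMultiplicity nu = 1 := by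
  classical
  have hzero : ∀ r ≠ nu, ∀ k : ℕ, ((X - C r) ^ k).rootMultiplicity nu = 0 := fun r hr k ↦
    rootMultiplicity_eq_zero (by simp [sub_eq_zero, hr.symm])
  rw [rootMultiplicity_mul, rootMultiplicity_mul, hzero lam hln, hzero mu hmn,
    rootMultiplicity_X_sub_C_self]
  all_goals simp [X_sub_C_ne_zero]

theorem Polynomial.eval_X_sub_C_mul_X_sub_C_eq_zero_of_isRoot {R : Type*} [CommRing R]
    [IsDomain R] {lam mu nu r : R} {a b : ℕ}
    (hr : ((X - C lam) ^ a * (X - C mu) ^ b * (X - C nu)).IsRoot r) (hrn : r ≠ nu) :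
    ((X - C lam) * (X - C mu)).eval r = 0 := by
  simp only [IsRoot, eval_mul, eval_pow, eval_sub, eval_X, eval_C, mul_eq_zero,
    pow_eq_zero_iff', sub_eq_zero, hrn, or_false] at hr
  simp only [eval_mul, eval_sub, eval_X, eval_C, mul_eq_zero, sub_eq_zero]
  tauto

theorem exists_smul_eq_one_or_eq_neg_one {ι : Type*} {v : ι → ℝ} (hv : v ≠ 0)
    (h : ∀ i j, v i * v i = v j * v j) :
    ∃ t : ℝ, ∀ i, (t • v) i = 1 ∨ (t • v) i = -1 := by
  obtain ⟨i₁, hi₁⟩ := Function.ne_iff.mp hv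
  refine ⟨(v i₁)⁻¹, fun i ↦ mul_self_eq_one_iff.mp ?_⟩
  rw [Pi.smul_apply, smul_eq_mul, mul_mul_mul_comm, h i i₁, ← mul_inv,
    inv_mul_cancel₀ (mul_ne_zero hi₁ hi₁)]

namespace IsSeidel

variable {n : ℕ} {S : Matrix (Fin n) (Fin n) ℝ}

theorem mul_self_apply_self (hS : IsSeidel S) (i : Fin n) : (S * S) i i = n - 1 := by
  have hterm : ∀ j, S i j * S j i = if j = i then 0 else 1 := by
    intro j
    split_ifs with hj
    · simp [hj, hS.2.1]
    · rw [hS.1.apply i j]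
      rcases hS.2.2 i j (Ne.symm hj) with h | h <;> simp [h]
  simp [mul_apply, hterm, Finset.sum_ite, Finset.filter_ne', Nat.cast_pred i.pos]

theorem aeval_X_sub_C_mul_X_sub_C_apply_self (hS : IsSeidel S) (lam mu : ℝ) (i : Fin n) :
    aeval S ((X - C lam) * (X - C mu)) i i = n - 1 + lam * mu := by
  have hexpand :
      aeval S ((X - C lam) * (X - C mu)) = S * S - (lam + mu) • S + (lam * mu) • 1 := by
    simp only [map_mul, map_sub, aeval_X, aeval_C, Algebra.algebraMap_eq_smul_one, sub_mul,
      mul_sub, smul_mul_assoc, mul_smul_comm, smul_smul, one_mul, mul_one]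
    module
  simp [hexpand, hS.mul_self_apply_self, hS.2.1]

end IsSeidel

theorem simple_eigenvalue_regular_eigenspace_general {n a b : ℕ}
    (S : Matrix (Fin n) (Fin n) ℝ) (hS : IsSeidel S) (lam mu nu : ℝ)
    (hln : lam ≠ nu) (hmn : mu ≠ nu)
    (hspec : S.charpoly = (X - C lam) ^ a * (X - C mu) ^ b * (X - C nu)) :
    ∃ x : Fin n → ℝ, (∀ i, x i = 1 ∨ x i = -1) ∧ S.mulVec x = nu • x := by
  have hA : S.IsHermitian := isHermitian_iff_isSymm.mpr hS.1
  obtain ⟨i₀, hi₀⟩ : ∃ i₀, Finset.univ.filter (hA.eigenvalues · = nu) = {i₀} := by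
    rw [← Finset.card_eq_one, hA.card_filter_eigenvalues_eq, RCLike.ofReal_real_eq_id, id, hspec,
      rootMultiplicity_X_sub_C_pow_mul_X_sub_C_pow_mul_X_sub_C a b hln hmn]
  have heig : ∀ i, hA.eigenvalues i = nu ↔ i = i₀ := by
    simpa [Finset.ext_iff] using hi₀
  have hν : hA.eigenvalues i₀ = nu := (heig i₀).mpr rfl
  set v : Fin n → ℝ := ⇑(hA.eigenvectorBasis i₀)
  set q : ℝ[X] := (X - C lam) * (X - C mu)
  have hq : ∀ i ≠ i₀, q.eval (hA.eigenvalues i) = 0 := fun i hi ↦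
    eval_X_sub_C_mul_X_sub_C_eq_zero_of_isRoot
      (by simpa [hspec] using hA.isRoot_charpoly_eigenvalues i) ((heig i).not.mpr hi)
  have hq₀ : q.eval nu ≠ 0 := by simp [q, sub_eq_zero, hln.symm, hmn.symm]
  have hdiag : ∀ i, q.eval nu * (v i * v i) = n - 1 + lam * mu := by
    intro i
    have hentry := congrFun₂ (hA.aeval_eq_smul_vecMulVec_of_eval_eigenvalues_eq_zero q i₀ hq) i i
    rw [hS.aeval_X_sub_C_mul_X_sub_C_apply_self] at hentry
    simpa [hν, v, vecMulVec_apply] using hentry.symm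
  have hv : v ≠ 0 := fun h ↦
    hA.eigenvectorBasis.orthonormal.ne_zero i₀ (by ext i; exact congrFun h i)
  obtain ⟨t, ht⟩ := exists_smul_eq_one_or_eq_neg_one hv fun i j ↦
    mul_left_cancel₀ hq₀ ((hdiag i).trans (hdiag j).symm)
  refine ⟨t • v, ht, ?_⟩
  rw [mulVec_smul, hA.mulVec_eigenvectorBasis, hν, smul_comm]

theorem simple_eigenvalue_regular_eigenspace {n a b : ℕ} (ha : 1 ≤ a) (hb : 1 ≤ b)
    (S : Matrix (Fin n) (Fin n) ℝ) (hS : IsSeidel S) (lam mu nu : ℝ)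
    (hlm : lam ≠ mu) (hln : lam ≠ nu) (hmn : mu ≠ nu)
    (hspec : S.charpoly = (X - C lam) ^ a * (X - C mu) ^ b * (X - C nu)) :
    ∃ x : Fin n → ℝ, (∀ i, x i = 1 ∨ x i = -1) ∧ S.mulVec x = nu • x :=
  simple_eigenvalue_regular_eigenspace_general S hS lam mu nu hln hmn hspec
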